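/- arXiv:2512.12816 — 4 statements merged into one kernel-verified Lean document; each statement's English description precedes it below -/
import Mathlib

section
/- Let g : [0,∞) → (0,∞) be convex, strictly decreasing, continuously differentiable, and let Y have differentiable survival function F̄_Y > 0 with ∫₀^∞ F̄_Y < ∞. If for every budget level the switching function of the front-loading policy, φ(t) = ∫_t^∞ g'(M min(s,t*)) F̄_Y(s) ds − g'(M t*) m_Y(t*) F̄_Y(t), satisfies φ(t) ≤ 0 on [0,t*) and φ(t) ≥ 0 on (t*,∞) for the t* determined by that budget, and t* ranges over all of (0,∞), then for t > t*, φ(t) = F̄_Y(t)·g'(Mt*)·(m_Y(t) − m_Y(t*)) ≥ 0 forces m_Y(t) ≤ m_Y(t*); hence m_Y is non-increasing on (0,∞), i.e., Y is DMRL. -/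
open MeasureTheory Set

/-- Converse direction: if the front-loading switching function has the optimal sign
pattern for every budget level (every switching time `t* ∈ (0,∞)`), then the mean
residual life is non-increasing on `(0,∞)`, i.e. `Y` is DMRL. -/
theorem stmt_6 (M : ℝ) (hM : 0 < M)
    (g g' F : ℝ → ℝ)
    (hg_conv : ConvexOn ℝ (Set.Ici 0) g)
    (hg_deriv : ∀ t, 0 ≤ t → HasDerivAt g (g' t) t)
    (hg'_neg : ∀ t, 0 ≤ t → g' t < 0)
    (hF_pos : ∀ t, 0 < F t)
    (hF_diff : Differentiable ℝ F)
    (hF_int : IntegrableOn F (Set.Ioi 0))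
    (m : ℝ → ℝ) (hm : ∀ t, m t = (∫ u in Set.Ioi t, F u) / F t)
    (hφ : ∀ tstar, 0 < tstar →
      ((∀ t ∈ Set.Ico (0:ℝ) tstar,
          (∫ s in Set.Ioi t, g' (M * min s tstar) * F s)
            - g' (M * tstar) * m tstar * F t ≤ 0) ∧
       (∀ t, tstar < t →
          0 ≤ (∫ s in Set.Ioi t, g' (M * min s tstar) * F s)
            - g' (M * tstar) * m tstar * F t))) :
    AntitoneOn m (Set.Ioi 0) := by
  intro a ha b hb hab
  rcases eq_or_lt_of_le hab with h | h
  · rw [h]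
  have ha' : (0:ℝ) < a := ha
  have key := (hφ a ha').2 b h
  have hmin : ∀ s ∈ Set.Ioi b, g' (M * min s a) * F s = g' (M * a) * F s := by
    intro s hs
    rw [min_eq_right (le_of_lt (lt_trans h hs))]
  rw [setIntegral_congr_fun measurableSet_Ioi hmin, integral_const_mul] at key
  have hg' : g' (M * a) < 0 := hg'_neg _ (le_of_lt (mul_pos hM ha'))
  have h1 : (∫ s in Set.Ioi b, F s) ≤ m a * F b := by
    nlinarith [key, hg', hF_pos b]
  rw [hm b, div_le_iff₀ (hF_pos b)]
  exact h1
end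

section
/- Let g : [0,∞) → (0,∞) be differentiable, convex, strictly decreasing, and let Y have survival function F̄_Y > 0, density f_Y, and mean residual life m_Y. If (δ₁*,…,δ_{N_D}*) with 0 = δ₀* < δ₁* < ⋯ < δ_{N_D}* is a critical point of h(δ) = Σ_{j=0}^{N_D−1} g(δ_j) ∫_{δ_j}^{δ_{j+1}} F̄_Y + g(δ_{N_D}) ∫_{δ_{N_D}}^∞ F̄_Y, then for k = 1,…,N_D−1: (g(δ_{k−1}*) − g(δ_k*))/(−g'(δ_k*)) = (∫_{δ_k*}^{δ_{k+1}*} F̄_Y(t) dt)/F̄_Y(δ_k*), and for k = N_D: (g(δ_{N_D−1}*) − g(δ_{N_D}*))/(−g'(δ_{N_D}*)) = m_Y(δ_{N_D}*). -/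
open MeasureTheory Set

/-!
Perturbing the single deployment time `δ_k` changes only the two integrals meeting at `δ_k` and
the weight `g(δ_k)` of the segment starting there. By the fundamental theorem of calculus the
partial derivative of the cost is
`g(δ_{k-1}) F̄(δ_k) - g(δ_k) F̄(δ_k) + g'(δ_k) R_k`, where `R_k` is the integral of `F̄` over the
segment after `δ_k` (over `(δ_N, ∞)` when `k = N`). Setting it to zero and dividing by
`-g'(δ_k) F̄(δ_k) ≠ 0` gives the stated ratios.
-/

section IntegralDerivatives

variable {F : ℝ → ℝ}

lemma hasDerivAt_setIntegral_Ioc_right (hF : Continuous F) {a b : ℝ} (hab : a < b) :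
    HasDerivAt (fun x => ∫ t in Ioc a x, F t) (F b) b := by
  refine (intervalIntegral.integral_hasDerivAt_right (hF.intervalIntegrable a b)
    (hF.stronglyMeasurableAtFilter _ _) hF.continuousAt).congr_of_eventuallyEq ?_
  filter_upwards [Ioi_mem_nhds hab] with x hx
  exact (intervalIntegral.integral_of_le hx.le).symm

lemma hasDerivAt_setIntegral_Ioc_left (hF : Continuous F) {a b : ℝ} (hab : a < b) :
    HasDerivAt (fun x => ∫ t in Ioc x b, F t) (-F a) a := by
  refine (intervalIntegral.integral_hasDerivAt_left (hF.intervalIntegrable a b)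
    (hF.stronglyMeasurableAtFilter _ _) hF.continuousAt).congr_of_eventuallyEq ?_
  filter_upwards [Iio_mem_nhds hab] with x hx
  exact (intervalIntegral.integral_of_le hx.le).symm

lemma hasDerivAt_setIntegral_Ioi (hF : Continuous F) {a b : ℝ} (hab : a < b)
    (hint : IntegrableOn F (Ioi a)) :
    HasDerivAt (fun x => ∫ t in Ioi x, F t) (-F b) b := by
  have hprim : HasDerivAt (fun x => (∫ t in Ioi a, F t) - ∫ t in a..x, F t) (-F b) b := by
    simpa using (intervalIntegral.integral_hasDerivAt_right (hF.intervalIntegrable a b)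
      (hF.stronglyMeasurableAtFilter _ _) hF.continuousAt).const_sub (∫ t in Ioi a, F t)
  refine hprim.congr_of_eventuallyEq ?_
  filter_upwards [Ioi_mem_nhds hab] with x hx
  rw [← intervalIntegral.integral_Ioi_sub_Ioi hint hx.le, sub_sub_cancel]

end IntegralDerivatives

/-- The objective `h(δ)` of the deployment problem with `N` deployments. -/
noncomputable def deploymentCost (g F : ℝ → ℝ) (N : ℕ) (δ : ℕ → ℝ) : ℝ :=
  (∑ j ∈ Finset.range N, g (δ j) * ∫ t in Ioc (δ j) (δ (j + 1)), F t)
    + g (δ N) * ∫ t in Ioi (δ N), F t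

section PartialDerivatives

variable {g g' F : ℝ → ℝ} {δ : ℕ → ℝ} {k : ℕ}

lemma hasDerivAt_segmentCost_update (hg : ∀ t, HasDerivAt g (g' t) t) (hF : Continuous F)
    (hk : 1 ≤ k) (hprev : δ (k - 1) < δ k) {j : ℕ} (hnext : j = k → δ k < δ (k + 1)) :
    HasDerivAt
      (fun x => g (Function.update δ k x j) *
        ∫ t in Ioc (Function.update δ k x j) (Function.update δ k x (j + 1)), F t)
      ((if j = k - 1 then g (δ (k - 1)) * F (δ k) else 0) +
        if j = k then g' (δ k) * (∫ t in Ioc (δ k) (δ (k + 1)), F t) - g (δ k) * F (δ k)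
        else 0)
      (δ k) := by
  rcases eq_or_ne j (k - 1) with rfl | hj
  · rw [Nat.sub_add_cancel hk]
    simp only [Function.update_self, Function.update_of_ne (by omega : k - 1 ≠ k), if_true,
      if_neg (by omega : k - 1 ≠ k), add_zero]
    exact (hasDerivAt_setIntegral_Ioc_right hF hprev).const_mul _
  rcases eq_or_ne j k with rfl | hj'
  · simp only [Function.update_self, Function.update_of_ne (by omega : j + 1 ≠ j), if_neg hj,
      if_true, zero_add]
    exact ((hg (δ j)).fun_mul (hasDerivAt_setIntegral_Ioc_left hF (hnext rfl))).congr_deriv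
      (by ring)
  · simp only [Function.update_of_ne hj', Function.update_of_ne (by omega : j + 1 ≠ k),
      if_neg hj, if_neg hj', add_zero]
    exact hasDerivAt_const _ _

lemma hasDerivAt_sum_segmentCost_update (hg : ∀ t, HasDerivAt g (g' t) t) (hF : Continuous F)
    {N : ℕ} (hk : 1 ≤ k) (hkN : k ≤ N) (hmono : ∀ j < N, δ j < δ (j + 1)) :
    HasDerivAt
      (fun x => ∑ j ∈ Finset.range N, g (Function.update δ k x j) *
        ∫ t in Ioc (Function.update δ k x j) (Function.update δ k x (j + 1)), F t)
      (g (δ (k - 1)) * F (δ k) +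
        if k < N then g' (δ k) * (∫ t in Ioc (δ k) (δ (k + 1)), F t) - g (δ k) * F (δ k)
        else 0)
      (δ k) := by
  have hprev : δ (k - 1) < δ k := by
    simpa only [Nat.sub_add_cancel hk] using hmono (k - 1) (by omega)
  have hsum := HasDerivAt.fun_sum (u := Finset.range N) fun j hj =>
    hasDerivAt_segmentCost_update hg hF hk hprev fun hjk =>
      hmono k (hjk ▸ Finset.mem_range.mp hj)
  simpa only [Finset.sum_add_distrib, Finset.sum_ite_eq', Finset.mem_range,
    if_pos (by omega : k - 1 < N)] using hsum

lemma hasDerivAt_deploymentCost_update_of_lt (hg : ∀ t, HasDerivAt g (g' t) t)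
    (hF : Continuous F) {N : ℕ} (hk : 1 ≤ k) (hkN : k < N) (hmono : ∀ j < N, δ j < δ (j + 1)) :
    HasDerivAt (fun x => deploymentCost g F N (Function.update δ k x))
      (g (δ (k - 1)) * F (δ k) - g (δ k) * F (δ k) +
        g' (δ k) * ∫ t in Ioc (δ k) (δ (k + 1)), F t)
      (δ k) := by
  have htail := hasDerivAt_const (δ k) (g (δ N) * ∫ t in Ioi (δ N), F t)
  have hsum := (hasDerivAt_sum_segmentCost_update hg hF hk hkN.le hmono).add htail
  rw [if_pos hkN] at hsum
  simp only [deploymentCost, Function.update_of_ne hkN.ne']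
  exact hsum.congr_deriv (by ring)

lemma hasDerivAt_deploymentCost_update_last (hg : ∀ t, HasDerivAt g (g' t) t)
    (hF : Continuous F) {N : ℕ} (hN : 1 ≤ N) (hmono : ∀ j < N, δ j < δ (j + 1))
    (hint : IntegrableOn F (Ioi (δ (N - 1)))) :
    HasDerivAt (fun x => deploymentCost g F N (Function.update δ N x))
      (g (δ (N - 1)) * F (δ N) - g (δ N) * F (δ N) + g' (δ N) * ∫ t in Ioi (δ N), F t)
      (δ N) := by
  have hprev : δ (N - 1) < δ N := by
    simpa only [Nat.sub_add_cancel hN] using hmono (N - 1) (by omega)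
  have htail := (hg (δ N)).fun_mul (hasDerivAt_setIntegral_Ioi hF hprev hint)
  have hsum := (hasDerivAt_sum_segmentCost_update hg hF hN le_rfl hmono).add htail
  rw [if_neg (lt_irrefl N)] at hsum
  simp only [deploymentCost, Function.update_self]
  exact hsum.congr_deriv (by ring)

end PartialDerivatives

lemma sub_div_neg_eq_div_of_stationary {a b d f r : ℝ} (hd : d ≠ 0) (hf : f ≠ 0)
    (h : a * f - b * f + d * r = 0) : (a - b) / -d = r / f := by
  rw [div_eq_div_iff (neg_ne_zero.mpr hd) hf]
  linear_combination h

theorem stmt_13_general (N : ℕ) (hN : 1 ≤ N)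
    (g g' F : ℝ → ℝ)
    (hg_deriv : ∀ t, HasDerivAt g (g' t) t) (hg'_neg : ∀ t, 0 ≤ t → g' t < 0)
    (hF_pos : ∀ t, 0 < F t) (hF_cont : Continuous F)
    (hF_int : IntegrableOn F (Set.Ioi 0))
    (δ : ℕ → ℝ) (h0 : δ 0 = 0) (hmono : ∀ j < N, δ j < δ (j + 1))
    (hcrit : ∀ k, 1 ≤ k → k ≤ N →
      HasDerivAt (fun x =>
        (∑ j ∈ Finset.range N,
            g (Function.update δ k x j) *
              ∫ t in Set.Ioc (Function.update δ k x j) (Function.update δ k x (j + 1)), F t)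
          + g (Function.update δ k x N) *
              ∫ t in Set.Ioi (Function.update δ k x N), F t)
        0 (δ k)) :
    (∀ k, 1 ≤ k → k < N →
      (g (δ (k - 1)) - g (δ k)) / (-(g' (δ k)))
        = (∫ t in Set.Ioc (δ k) (δ (k + 1)), F t) / F (δ k)) ∧
    (g (δ (N - 1)) - g (δ N)) / (-(g' (δ N)))
        = (∫ t in Set.Ioi (δ N), F t) / F (δ N) := by
  have hstrict : StrictMonoOn δ (Iic N) :=
    strictMonoOn_Iic_of_lt_succ fun m hm => by simpa using hmono m hm
  have hnonneg : ∀ j ≤ N, 0 ≤ δ j := fun j hj =>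
    h0 ▸ hstrict.monotoneOn (by simp) hj (Nat.zero_le j)
  have hg'_ne : ∀ k ≤ N, g' (δ k) ≠ 0 := fun k hk => (hg'_neg _ (hnonneg k hk)).ne
  refine ⟨fun k hk hkN => ?_, ?_⟩
  · exact sub_div_neg_eq_div_of_stationary (hg'_ne k hkN.le) (hF_pos _).ne'
      ((hasDerivAt_deploymentCost_update_of_lt hg_deriv hF_cont hk hkN hmono).unique
        (hcrit k hk hkN.le))
  · have hint : IntegrableOn F (Ioi (δ (N - 1))) :=
      hF_int.mono_set (Ioi_subset_Ioi (hnonneg _ (Nat.sub_le N 1)))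
    exact sub_div_neg_eq_div_of_stationary (hg'_ne N le_rfl) (hF_pos _).ne'
      ((hasDerivAt_deploymentCost_update_last hg_deriv hF_cont hN hmono hint).unique
        (hcrit N hN le_rfl))

/-- First-order optimality conditions for the deployment problem with a fixed number
`N` of deployments: at a critical point of
`h(δ) = Σ_{j=0}^{N-1} g(δ_j)∫_{δ_j}^{δ_{j+1}} F̄ + g(δ_N)∫_{δ_N}^∞ F̄`,
`(g(δ_{k-1}) - g(δ_k))/(-g'(δ_k))` equals `(∫_{δ_k}^{δ_{k+1}} F̄)/F̄(δ_k)` for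
`1 ≤ k < N` and equals the mean residual life `m_Y(δ_N)` for `k = N`. -/
theorem stmt_13 (N : ℕ) (hN : 1 ≤ N)
    (g g' F : ℝ → ℝ)
    (hg_conv : ConvexOn ℝ (Set.Ici 0) g) (hg_pos : ∀ t, 0 ≤ t → 0 < g t)
    (hg_deriv : ∀ t, HasDerivAt g (g' t) t) (hg'_neg : ∀ t, 0 ≤ t → g' t < 0)
    (hF_pos : ∀ t, 0 < F t) (hF_cont : Continuous F)
    (hF_int : IntegrableOn F (Set.Ioi 0))
    (δ : ℕ → ℝ) (h0 : δ 0 = 0) (hmono : ∀ j < N, δ j < δ (j + 1))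
    (hcrit : ∀ k, 1 ≤ k → k ≤ N →
      HasDerivAt (fun x =>
        (∑ j ∈ Finset.range N,
            g (Function.update δ k x j) *
              ∫ t in Set.Ioc (Function.update δ k x j) (Function.update δ k x (j + 1)), F t)
          + g (Function.update δ k x N) *
              ∫ t in Set.Ioi (Function.update δ k x N), F t)
        0 (δ k)) :
    (∀ k, 1 ≤ k → k < N →
      (g (δ (k - 1)) - g (δ k)) / (-(g' (δ k)))
        = (∫ t in Set.Ioc (δ k) (δ (k + 1)), F t) / F (δ k)) ∧
    (g (δ (N - 1)) - g (δ N)) / (-(g' (δ N)))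
        = (∫ t in Set.Ioi (δ N), F t) / F (δ N) :=
  stmt_13_general N hN g g' F hg_deriv hg'_neg hF_pos hF_cont hF_int δ h0 hmono hcrit
end

section
/- For β, λ > 0, define the map T(Δ) = (1/β) ln( (β/λ)(1 − e^{−λΔ}) ) for Δ > 0 such that the argument of ln exceeds 0. Then the backward recursion Δ_{N_D} = (1/β) ln(β/λ + 1), Δ_k = T(Δ_{k+1}), produces a sequence that is positive and non-increasing in k decreasing from N_D (i.e., Δ_k ≤ Δ_{k+1} for all k), provided each iterate remains positive. -/
open Real

/-!
Since `1 - e^{-λΔ} ≤ λΔ`, the argument of the logarithm in `T(Δ)` is at most `βΔ`, and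
`log x ≤ x`, so `T(Δ) ≤ (1/β) · βΔ = Δ`. Each backward step of the recursion can therefore
only shorten the duration.
-/

/-- The paper's map `T`. -/
noncomputable def backwardStep (β lam Δ : ℝ) : ℝ :=
  (1 / β) * log ((β / lam) * (1 - exp (-(lam * Δ))))

lemma backwardStep_le_self {β lam Δ : ℝ} (hβ : 0 < β) (hlam : 0 < lam) (hΔ : 0 ≤ Δ) :
    backwardStep β lam Δ ≤ Δ := by
  set x := (β / lam) * (1 - exp (-(lam * Δ)))
  have hx_nonneg : 0 ≤ x :=
    mul_nonneg (div_pos hβ hlam).le (sub_nonneg.2 (exp_le_one_iff.2 (by nlinarith)))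
  have hx_le : x ≤ β * Δ := by
    have h : 1 - exp (-(lam * Δ)) ≤ lam * Δ := by linarith [add_one_le_exp (-(lam * Δ))]
    calc x ≤ (β / lam) * (lam * Δ) := mul_le_mul_of_nonneg_left h (div_pos hβ hlam).le
      _ = β * Δ := by field_simp
  calc backwardStep β lam Δ = (1 / β) * log x := rfl
    _ ≤ (1 / β) * (β * Δ) := by gcongr; exact (log_le_self hx_nonneg).trans hx_le
    _ = Δ := by field_simp

theorem stmt_15_general (β lam : ℝ) (hβ : 0 < β) (hlam : 0 < lam)
    (N : ℕ) (Δ : ℕ → ℝ)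
    (hrec : ∀ k, 1 ≤ k → k < N →
      Δ k = (1 / β) * Real.log ((β / lam) * (1 - Real.exp (-(lam * Δ (k + 1))))))
    (hpos : ∀ k, 1 ≤ k → k ≤ N → 0 < Δ k) :
    ∀ k, 1 ≤ k → k < N → Δ k ≤ Δ (k + 1) := by
  intro k hk hkN
  rw [hrec k hk hkN]
  exact backwardStep_le_self hβ hlam (hpos (k + 1) (by omega) hkN).le

/-- The backward recursion `Δ_{N_D} = (1/β)ln(β/λ+1)`,
`Δ_k = (1/β)ln((β/λ)(1 - e^{-λΔ_{k+1}}))` produces inter-deployment durations that are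
non-increasing in `k` (i.e. `Δ_k ≤ Δ_{k+1}`), provided each iterate remains positive. -/
theorem stmt_15 (β lam : ℝ) (hβ : 0 < β) (hlam : 0 < lam)
    (N : ℕ) (Δ : ℕ → ℝ)
    (hlast : Δ N = (1 / β) * Real.log (β / lam + 1))
    (hrec : ∀ k, 1 ≤ k → k < N →
      Δ k = (1 / β) * Real.log ((β / lam) * (1 - Real.exp (-(lam * Δ (k + 1))))))
    (hpos : ∀ k, 1 ≤ k → k ≤ N → 0 < Δ k) :
    ∀ k, 1 ≤ k → k < N → Δ k ≤ Δ (k + 1) :=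
  stmt_15_general β lam hβ hlam N Δ hrec hpos
end

section
/- Let g : [0,∞) → [0,∞) be convex and non-increasing, Y a nonnegative random variable with survival function F̄_Y, finite mean, and M, c > 0 with cM < ∫₀^∞ F̄_Y. Among all measurable e : [0,∞) → [0,M] with ∫₀^∞ e(t) F̄_Y(t) dt = ∫₀^{t*} M F̄_Y(t) dt (where t* satisfies this budget identity), if Y is DMRL then the front-loading policy e*(t) = M·1{t ≤ t*} minimizes J(e) = ∫₀^∞ g(∫₀^t e) F̄_Y(t) dt; i.e., J(e*) ≤ J(e) for every feasible e. -/
open MeasureTheory Set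
open scoped ENNReal

/-!
Write `E(t) = ∫₀^t e`, `E*` for the cumulative effort of the front-loading policy `e*`, and
`β = -g'(M t*) ≥ 0`. Since `E* ≤ M t*`, `g'` is monotone, and `E` can exceed `E*` only after `t*`
(where `E* = M t*`), the tangent lines of `g` give `g(E*) + β E* ≤ g(E) + β E` pointwise. After
integrating against `F̄` it remains to show `∫ E F̄ ≤ ∫ E* F̄`. By Tonelli `∫ E F̄ = ∫ e G` with
`G(τ) = ∫_τ^∞ F̄`. DMRL says `G / F̄` is non-increasing, so for `c = G(t*) / F̄(t*)` the product
`(e - e*)(G - c F̄)` is pointwise nonpositive, and the budget `∫ e F̄ ≤ ∫ e* F̄` gives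
`∫ e G ≤ ∫ e* G`. Both steps are the same weak-duality argument in `ℝ≥0∞`: from
`f + c b' ≤ f' + c b` pointwise and `∫ b ≤ ∫ b' < ∞` one gets `∫ f ≤ ∫ f'`.
-/

theorem ConvexOn.add_mul_sub_le_of_hasDerivAt {S : Set ℝ} {f : ℝ → ℝ} {f' x y : ℝ}
    (hf : ConvexOn ℝ S f) (hx : x ∈ S) (hy : y ∈ S) (hd : HasDerivAt f f' x) :
    f x + f' * (y - x) ≤ f y := by
  rcases lt_trichotomy x y with hxy | rfl | hxy
  · have h := hf.le_slope_of_hasDerivAt hx hy hxy hd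
    rw [slope_def_field, le_div_iff₀ (sub_pos.2 hxy)] at h
    linarith
  · simp
  · have h := hf.slope_le_of_hasDerivAt hy hx hxy hd
    rw [slope_def_field, div_le_iff₀ (sub_pos.2 hxy)] at h
    linarith

theorem ConvexOn.sub_mul_le_sub_mul_of_hasDerivAt {S : Set ℝ} {f f' : ℝ → ℝ}
    (hf : ConvexOn ℝ S f) (hd : ∀ x ∈ S, HasDerivAt f (f' x) x) {a x y : ℝ}
    (ha : a ∈ S) (hx : x ∈ S) (hy : y ∈ S) (hxa : x ≤ a) (hxy : x < y → x = a) :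
    f x - f' a * x ≤ f y - f' a * y := by
  have htan := hf.add_mul_sub_le_of_hasDerivAt hx hy (hd x hx)
  rcases le_or_gt y x with hyx | hxy'
  · have hmono : f' x ≤ f' a := by
      have := hf.monotoneOn_deriv (fun z hz => (hd z hz).differentiableAt) hx ha hxa
      rwa [(hd x hx).deriv, (hd a ha).deriv] at this
    nlinarith
  · obtain rfl := hxy hxy'
    linarith

theorem HasDerivAt.nonpos_of_antitoneOn_Ici {g : ℝ → ℝ} {g' a x : ℝ} (hd : HasDerivAt g g' x)
    (hg : AntitoneOn g (Ici a)) (hx : a ≤ x) : g' ≤ 0 := by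
  rw [← hd.hasDerivWithinAt.derivWithin (uniqueDiffOn_Ici a x hx)]
  exact hg.derivWithin_nonpos

theorem ENNReal.ofReal_add_le_ofReal_add {x y x' y' : ℝ} (hx : 0 ≤ x) (hy : 0 ≤ y)
    (h : x + y ≤ x' + y') :
    ENNReal.ofReal x + ENNReal.ofReal y ≤ ENNReal.ofReal x' + ENNReal.ofReal y' := by
  rw [← ENNReal.ofReal_add hx hy]
  exact (ENNReal.ofReal_le_ofReal h).trans ENNReal.ofReal_add_le

theorem lintegral_le_of_add_mul_le_add_mul {α : Type*} [MeasurableSpace α] {μ : Measure α}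
    {f f' b b' : α → ℝ≥0∞} {c : ℝ≥0∞} (h : ∀ᵐ x ∂μ, f x + c * b' x ≤ f' x + c * b x)
    (hb : AEMeasurable b μ) (hbb' : ∫⁻ x, b x ∂μ ≤ ∫⁻ x, b' x ∂μ)
    (hfin : c * ∫⁻ x, b' x ∂μ ≠ ∞) :
    ∫⁻ x, f x ∂μ ≤ ∫⁻ x, f' x ∂μ := by
  refine (ENNReal.add_le_add_iff_right hfin).mp ?_
  calc ∫⁻ x, f x ∂μ + c * ∫⁻ x, b' x ∂μ
      ≤ ∫⁻ x, f x ∂μ + ∫⁻ x, c * b' x ∂μ := by gcongr; exact lintegral_const_mul_le _ _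
    _ ≤ ∫⁻ x, f x + c * b' x ∂μ := le_lintegral_add _ _
    _ ≤ ∫⁻ x, f' x + c * b x ∂μ := lintegral_mono_ae h
    _ = ∫⁻ x, f' x ∂μ + c * ∫⁻ x, b x ∂μ := by
        rw [lintegral_add_right' _ (hb.const_mul c), lintegral_const_mul'' c hb]
    _ ≤ ∫⁻ x, f' x ∂μ + c * ∫⁻ x, b' x ∂μ := by gcongr

theorem lintegral_Ioi_lintegral_Ioc_mul_swap {μ ν : Measure ℝ} [SFinite μ] [SFinite ν] {a : ℝ}
    {f h : ℝ → ℝ≥0∞} (hf : Measurable f) (hh : Measurable h) :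
    ∫⁻ t in Ioi a, (∫⁻ τ in Ioc a t, h τ ∂μ) * f t ∂ν
      = ∫⁻ τ in Ioi a, h τ * ∫⁻ t in Ici τ, f t ∂ν ∂μ := by
  set S : Set (ℝ × ℝ) := {p | a < p.2 ∧ p.2 ≤ p.1}
  set Φ : ℝ × ℝ → ℝ≥0∞ := S.indicator fun p => h p.2 * f p.1
  have hS : MeasurableSet S :=
    (measurableSet_lt measurable_const measurable_snd).inter
      (measurableSet_le measurable_snd measurable_fst)
  have hΦ : Measurable Φ :=
    ((hh.comp measurable_snd).mul (hf.comp measurable_fst)).indicator hS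
  have inner_τ : ∀ t, (Ioi a).indicator (fun t => (∫⁻ τ in Ioc a t, h τ ∂μ) * f t) t
      = ∫⁻ τ, Φ (t, τ) ∂μ := by
    intro t
    have : ∀ τ, Φ (t, τ) = (Ioc a t).indicator (fun τ => h τ * f t) τ := fun τ => by
      simp [Φ, S, indicator_apply]
    rw [lintegral_congr this, lintegral_indicator measurableSet_Ioc, lintegral_mul_const _ hh]
    by_cases ht : t ∈ Ioi a
    · rw [indicator_of_mem ht]
    · rw [indicator_of_notMem ht, Ioc_eq_empty (by simpa using ht)]
      simp
  have inner_t : ∀ τ, (Ioi a).indicator (fun τ => h τ * ∫⁻ t in Ici τ, f t ∂ν) τ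
      = ∫⁻ t, Φ (t, τ) ∂ν := by
    intro τ
    by_cases hτ : τ ∈ Ioi a
    · have : ∀ t, Φ (t, τ) = (Ici τ).indicator (fun t => h τ * f t) t := fun t => by
        simp [Φ, S, indicator_apply, mem_Ioi.mp hτ]
      rw [indicator_of_mem hτ, lintegral_congr this, lintegral_indicator measurableSet_Ici,
        lintegral_const_mul _ hf]
    · have : ∀ t, Φ (t, τ) = 0 := fun t => by
        simp_all [Φ, S, indicator_apply]
      simp [indicator_of_notMem hτ, this]
  calc ∫⁻ t in Ioi a, (∫⁻ τ in Ioc a t, h τ ∂μ) * f t ∂ν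
      = ∫⁻ t, ∫⁻ τ, Φ (t, τ) ∂μ ∂ν := by
        rw [← lintegral_indicator measurableSet_Ioi]
        exact lintegral_congr inner_τ
    _ = ∫⁻ τ, ∫⁻ t, Φ (t, τ) ∂ν ∂μ := lintegral_lintegral_swap hΦ.aemeasurable
    _ = ∫⁻ τ in Ioi a, h τ * ∫⁻ t in Ici τ, f t ∂ν ∂μ := by
        rw [← lintegral_indicator measurableSet_Ioi]
        exact (lintegral_congr inner_t).symm

theorem lintegral_setIntegral_Ioc_mul_eq_lintegral_mul_integral_Ioi {e F : ℝ → ℝ} {a : ℝ}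
    (he_meas : Measurable e) (he : ∀ t, 0 ≤ e t) (he_int : ∀ t, IntegrableOn e (Ioc a t))
    (hF_meas : Measurable F) (hF : ∀ t, 0 ≤ F t) (hF_int : IntegrableOn F (Ioi a)) :
    ∫⁻ t in Ioi a, ENNReal.ofReal ((∫ τ in Ioc a t, e τ) * F t)
      = ∫⁻ t in Ioi a, ENNReal.ofReal (e t * ∫ u in Ioi t, F u) := by
  calc ∫⁻ t in Ioi a, ENNReal.ofReal ((∫ τ in Ioc a t, e τ) * F t)
      = ∫⁻ t in Ioi a, (∫⁻ τ in Ioc a t, ENNReal.ofReal (e τ)) * ENNReal.ofReal (F t) := by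
        refine setLIntegral_congr_fun measurableSet_Ioi fun t _ => ?_
        rw [ENNReal.ofReal_mul (setIntegral_nonneg measurableSet_Ioc fun τ _ => he τ),
          ofReal_integral_eq_lintegral_ofReal (he_int t) (ae_of_all _ he)]
    _ = ∫⁻ t in Ioi a, ENNReal.ofReal (e t) * ∫⁻ u in Ici t, ENNReal.ofReal (F u) :=
        lintegral_Ioi_lintegral_Ioc_mul_swap hF_meas.ennreal_ofReal he_meas.ennreal_ofReal
    _ = ∫⁻ t in Ioi a, ENNReal.ofReal (e t * ∫ u in Ioi t, F u) := by
        refine setLIntegral_congr_fun measurableSet_Ioi fun t ht => ?_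
        rw [ENNReal.ofReal_mul (he t), setLIntegral_congr Ioi_ae_eq_Ici.symm,
          ofReal_integral_eq_lintegral_ofReal (hF_int.mono_set (Ioi_subset_Ioi (le_of_lt ht)))
            (ae_of_all _ hF)]

theorem lintegral_mul_integral_Ioi_le_of_crossing {F e s : ℝ → ℝ} {t₀ : ℝ}
    (hF_pos : ∀ t, 0 < F t)
    (hDMRL : AntitoneOn (fun t => (∫ u in Ioi t, F u) / F t) (Ici 0)) (ht₀ : 0 ≤ t₀)
    (he : ∀ t, 0 ≤ e t) (hs : ∀ t, 0 ≤ s t)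
    (hbefore : ∀ t ≤ t₀, e t ≤ s t) (hafter : ∀ t, t₀ < t → s t ≤ e t)
    (heF : IntegrableOn (fun t => e t * F t) (Ioi 0))
    (hsF : IntegrableOn (fun t => s t * F t) (Ioi 0))
    (hbudget : ∫ t in Ioi 0, e t * F t ≤ ∫ t in Ioi 0, s t * F t) :
    ∫⁻ t in Ioi 0, ENNReal.ofReal (e t * ∫ u in Ioi t, F u)
      ≤ ∫⁻ t in Ioi 0, ENNReal.ofReal (s t * ∫ u in Ioi t, F u) := by
  set G : ℝ → ℝ := fun t => ∫ u in Ioi t, F u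
  have hG : ∀ t, 0 ≤ G t := fun t => setIntegral_nonneg measurableSet_Ioi fun u _ => (hF_pos u).le
  set c := G t₀ / F t₀
  have hc : 0 ≤ c := div_nonneg (hG t₀) (hF_pos t₀).le
  have hcross : ∀ t, 0 < t → e t * G t + c * (s t * F t) ≤ s t * G t + c * (e t * F t) := by
    intro t ht
    rcases le_or_gt t t₀ with htt₀ | htt₀
    · have : c * F t ≤ G t := (le_div_iff₀ (hF_pos t)).1 (hDMRL ht.le ht₀ htt₀)
      nlinarith [hbefore t htt₀]
    · have : G t ≤ c * F t := (div_le_iff₀ (hF_pos t)).1 (hDMRL ht₀ ht.le htt₀.le)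
      nlinarith [hafter t htt₀]
  refine lintegral_le_of_add_mul_le_add_mul (c := ENNReal.ofReal c)
    (b := fun t => ENNReal.ofReal (e t * F t)) (b' := fun t => ENNReal.ofReal (s t * F t))
    (ae_restrict_of_forall_mem measurableSet_Ioi fun t ht => ?_)
    heF.aemeasurable.ennreal_ofReal ?_
    (ENNReal.mul_ne_top ENNReal.ofReal_ne_top hsF.lintegral_lt_top.ne)
  · rw [← ENNReal.ofReal_mul hc, ← ENNReal.ofReal_mul hc]
    exact ENNReal.ofReal_add_le_ofReal_add (mul_nonneg (he t) (hG t))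
      (mul_nonneg hc (mul_nonneg (hs t) (hF_pos t).le)) (hcross t ht)
  · rw [← ofReal_integral_eq_lintegral_ofReal heF
        (ae_of_all _ fun t => mul_nonneg (he t) (hF_pos t).le),
      ← ofReal_integral_eq_lintegral_ofReal hsF
        (ae_of_all _ fun t => mul_nonneg (hs t) (hF_pos t).le)]
    exact ENNReal.ofReal_le_ofReal hbudget

noncomputable def cumulativeEffort (e : ℝ → ℝ) (t : ℝ) : ℝ := ∫ τ in Ioc 0 t, e τ

noncomputable def frontLoading (M t₀ τ : ℝ) : ℝ := if τ ≤ t₀ then M else 0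

section Allocation

variable {e : ℝ → ℝ} {M t₀ : ℝ}

theorem norm_le_of_mem_Icc {x : ℝ} (hx : x ∈ Icc 0 M) : ‖x‖ ≤ M := by
  rw [Real.norm_of_nonneg hx.1]
  exact hx.2

theorem frontLoading_mem_Icc (hM : 0 ≤ M) (τ : ℝ) : frontLoading M t₀ τ ∈ Icc 0 M := by
  unfold frontLoading
  split_ifs <;> simp [hM]

theorem measurable_frontLoading : Measurable (frontLoading M t₀) :=
  Measurable.ite measurableSet_Iic measurable_const measurable_const

theorem frontLoading_eq_indicator : frontLoading M t₀ = (Iic t₀).indicator fun _ => M := by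
  ext τ
  simp [frontLoading, indicator_apply]

theorem setIntegral_frontLoading_mul (F : ℝ → ℝ) :
    ∫ t in Ioi 0, frontLoading M t₀ t * F t = ∫ t in Ioc 0 t₀, M * F t := by
  simp_rw [frontLoading_eq_indicator, ← indicator_mul_left]
  rw [setIntegral_indicator measurableSet_Iic, Ioi_inter_Iic]

theorem integrableOn_Ioc_of_mem_Icc (he_meas : Measurable e) (he : ∀ t, e t ∈ Icc 0 M)
    (a b : ℝ) : IntegrableOn e (Ioc a b) :=
  Measure.integrableOn_of_bounded measure_Ioc_lt_top.ne he_meas.aestronglyMeasurable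
    (ae_of_all _ fun t => norm_le_of_mem_Icc (he t))

theorem cumulativeEffort_nonneg (he : ∀ t, 0 ≤ e t) (t : ℝ) : 0 ≤ cumulativeEffort e t :=
  setIntegral_nonneg measurableSet_Ioc fun τ _ => he τ

theorem cumulativeEffort_le_mul (he : ∀ t, e t ∈ Icc 0 M) {t : ℝ} (ht : 0 ≤ t) :
    cumulativeEffort e t ≤ M * t := by
  have h := norm_setIntegral_le_of_norm_le_const
    (measure_Ioc_lt_top (μ := volume) (a := 0) (b := t)) fun τ _ => norm_le_of_mem_Icc (he τ)
  rw [Real.volume_real_Ioc_of_le ht, sub_zero] at h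
  exact (le_abs_self _).trans h

theorem measurable_cumulativeEffort (he_meas : Measurable e) (he : ∀ t, e t ∈ Icc 0 M) :
    Measurable (cumulativeEffort e) :=
  Monotone.measurable fun _ b hab =>
    setIntegral_mono_set (integrableOn_Ioc_of_mem_Icc he_meas he 0 b)
      (ae_of_all _ fun τ => (he τ).1) (Ioc_subset_Ioc_right hab).eventuallyLE

theorem cumulativeEffort_frontLoading (ht₀ : 0 ≤ t₀) {t : ℝ} (ht : 0 ≤ t) :
    cumulativeEffort (frontLoading M t₀) t = M * min t t₀ := by
  rw [cumulativeEffort, frontLoading_eq_indicator, setIntegral_indicator measurableSet_Iic,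
    Ioc_inter_Iic, setIntegral_const, Real.volume_real_Ioc_of_le (le_min ht ht₀), smul_eq_mul,
    sub_zero, mul_comm]

theorem lintegral_cumulativeEffort_mul_le_frontLoading {F : ℝ → ℝ} (hM : 0 ≤ M) (ht₀ : 0 ≤ t₀)
    (hF_pos : ∀ t, 0 < F t) (hF_meas : Measurable F) (hF_int : IntegrableOn F (Ioi 0))
    (hDMRL : AntitoneOn (fun t => (∫ u in Ioi t, F u) / F t) (Ici 0))
    (he_meas : Measurable e) (he : ∀ t, e t ∈ Icc 0 M)
    (hbudget : ∫ t in Ioi 0, e t * F t ≤ ∫ t in Ioc 0 t₀, M * F t) :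
    ∫⁻ t in Ioi 0, ENNReal.ofReal (cumulativeEffort e t * F t)
      ≤ ∫⁻ t in Ioi 0, ENNReal.ofReal (cumulativeEffort (frontLoading M t₀) t * F t) := by
  have hs := frontLoading_mem_Icc (t₀ := t₀) hM
  have hF : ∀ t, 0 ≤ F t := fun t => (hF_pos t).le
  unfold cumulativeEffort
  rw [lintegral_setIntegral_Ioc_mul_eq_lintegral_mul_integral_Ioi he_meas (fun t => (he t).1)
      (integrableOn_Ioc_of_mem_Icc he_meas he 0) hF_meas hF hF_int,
    lintegral_setIntegral_Ioc_mul_eq_lintegral_mul_integral_Ioi measurable_frontLoading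
      (fun t => (hs t).1) (integrableOn_Ioc_of_mem_Icc measurable_frontLoading hs 0) hF_meas hF
      hF_int]
  refine lintegral_mul_integral_Ioi_le_of_crossing hF_pos hDMRL ht₀ (fun t => (he t).1)
    (fun t => (hs t).1) (fun t ht => ?_) (fun t ht => ?_)
    (hF_int.bdd_mul he_meas.aestronglyMeasurable (ae_of_all _ fun t => norm_le_of_mem_Icc (he t)))
    (hF_int.bdd_mul measurable_frontLoading.aestronglyMeasurable
      (ae_of_all _ fun t => norm_le_of_mem_Icc (hs t)))
    (by rwa [setIntegral_frontLoading_mul])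
  · simpa [frontLoading, ht] using (he t).2
  · simpa [frontLoading, not_le.2 ht] using (he t).1

theorem sub_mul_cumulativeEffort_frontLoading_le {g g' : ℝ → ℝ}
    (hg_conv : ConvexOn ℝ (Ici 0) g) (hg_deriv : ∀ t, 0 ≤ t → HasDerivAt g (g' t) t)
    (hM : 0 ≤ M) (ht₀ : 0 ≤ t₀) (he : ∀ t, e t ∈ Icc 0 M) {t : ℝ} (ht : 0 ≤ t) :
    g (cumulativeEffort (frontLoading M t₀) t)
        - g' (M * t₀) * cumulativeEffort (frontLoading M t₀) t
      ≤ g (cumulativeEffort e t) - g' (M * t₀) * cumulativeEffort e t := by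
  rw [cumulativeEffort_frontLoading ht₀ ht]
  refine hg_conv.sub_mul_le_sub_mul_of_hasDerivAt hg_deriv (mul_nonneg hM ht₀)
    (mul_nonneg hM (le_min ht ht₀)) (cumulativeEffort_nonneg (fun τ => (he τ).1) t)
    (mul_le_mul_of_nonneg_left (min_le_right t t₀) hM) fun hlt => ?_
  rcases le_total t t₀ with htt₀ | htt₀
  · rw [min_eq_left htt₀] at hlt
    exact absurd (cumulativeEffort_le_mul he ht) (not_le.2 hlt)
  · rw [min_eq_right htt₀]

theorem lintegral_cumulativeEffort_frontLoading_mul_lt_top {F : ℝ → ℝ} (hM : 0 ≤ M)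
    (ht₀ : 0 ≤ t₀) (hF_int : IntegrableOn F (Ioi 0)) :
    ∫⁻ t in Ioi 0, ENNReal.ofReal (cumulativeEffort (frontLoading M t₀) t * F t) < ∞ := by
  have hs := frontLoading_mem_Icc (t₀ := t₀) hM
  refine (hF_int.bdd_mul (c := M * t₀)
    (measurable_cumulativeEffort measurable_frontLoading hs).aestronglyMeasurable
    (ae_restrict_of_forall_mem measurableSet_Ioi fun t ht => ?_)).lintegral_lt_top
  rw [Real.norm_of_nonneg (cumulativeEffort_nonneg (fun τ => (hs τ).1) t),
    cumulativeEffort_frontLoading ht₀ (le_of_lt ht)]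
  exact mul_le_mul_of_nonneg_left (min_le_right t t₀) hM

end Allocation

theorem stmt_18_general (M tstar : ℝ) (hM : 0 < M) (ht : 0 < tstar)
    (g g' F : ℝ → ℝ)
    (hg_conv : ConvexOn ℝ (Set.Ici 0) g) (hg_anti : AntitoneOn g (Set.Ici 0))
    (hg_nonneg : ∀ t, 0 ≤ t → 0 ≤ g t)
    (hg_deriv : ∀ t, 0 ≤ t → HasDerivAt g (g' t) t)
    (hF_pos : ∀ t, 0 < F t) (hF_diff : Differentiable ℝ F)
    (hF_int : IntegrableOn F (Set.Ioi 0))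
    (hDMRL : AntitoneOn (fun t => (∫ u in Set.Ioi t, F u) / F t) (Set.Ici 0))
    (e : ℝ → ℝ) (he_meas : Measurable e) (he : ∀ t, e t ∈ Set.Icc 0 M)
    (hbudget : (∫ t in Set.Ioi (0:ℝ), e t * F t) ≤ ∫ t in Set.Ioc (0:ℝ) tstar, M * F t) :
    (∫⁻ t in Set.Ioi (0:ℝ),
        ENNReal.ofReal
          (g (∫ τ in Set.Ioc (0:ℝ) t, (if τ ≤ tstar then M else 0)) * F t))
      ≤ ∫⁻ t in Set.Ioi (0:ℝ),
          ENNReal.ofReal (g (∫ τ in Set.Ioc (0:ℝ) t, e τ) * F t) := by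
  set Estar := cumulativeEffort (frontLoading M tstar)
  set E := cumulativeEffort e
  have hF_meas : Measurable F := hF_diff.continuous.measurable
  have hMt : 0 ≤ M * tstar := mul_nonneg hM.le ht.le
  set β := -g' (M * tstar)
  have hβ : 0 ≤ β := neg_nonneg.2 ((hg_deriv _ hMt).nonpos_of_antitoneOn_Ici hg_anti hMt)
  have hEstar : ∀ t, 0 ≤ Estar t :=
    cumulativeEffort_nonneg fun τ => (frontLoading_mem_Icc hM.le τ).1
  have hpoint : ∀ t ∈ Ioi (0:ℝ),
      ENNReal.ofReal (g (Estar t) * F t) + ENNReal.ofReal β * ENNReal.ofReal (Estar t * F t)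
        ≤ ENNReal.ofReal (g (E t) * F t) + ENNReal.ofReal β * ENNReal.ofReal (E t * F t) := by
    intro t ht'
    have hlag := sub_mul_cumulativeEffort_frontLoading_le hg_conv hg_deriv hM.le ht.le he ht'.le
    have hF0 := (hF_pos t).le
    rw [← ENNReal.ofReal_mul hβ, ← ENNReal.ofReal_mul hβ]
    refine ENNReal.ofReal_add_le_ofReal_add (mul_nonneg (hg_nonneg _ (hEstar t)) hF0)
      (mul_nonneg hβ (mul_nonneg (hEstar t) hF0)) ?_
    nlinarith
  exact lintegral_le_of_add_mul_le_add_mul (ae_restrict_of_forall_mem measurableSet_Ioi hpoint)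
    ((measurable_cumulativeEffort he_meas he).mul hF_meas).ennreal_ofReal.aemeasurable
    (lintegral_cumulativeEffort_mul_le_frontLoading hM.le ht.le hF_pos hF_meas hF_int hDMRL
      he_meas he hbudget)
    (ENNReal.mul_ne_top ENNReal.ofReal_ne_top
      (lintegral_cumulativeEffort_frontLoading_mul_lt_top hM.le ht.le hF_int).ne)

/-- Global optimality of the front-loading policy under DMRL concept durations: among
all measurable allocations `e : [0,∞) → [0,M]` satisfying the budget constraint
`∫₀^∞ e F̄ ≤ ∫₀^{t*} M F̄`, the bang-bang policy `e*(t) = M·1{t ≤ t*}` minimizes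
`J(e) = ∫₀^∞ g(∫₀^t e) F̄(t) dt`. -/
theorem stmt_18 (M tstar : ℝ) (hM : 0 < M) (ht : 0 < tstar)
    (g g' F : ℝ → ℝ)
    (hg_conv : ConvexOn ℝ (Set.Ici 0) g) (hg_anti : AntitoneOn g (Set.Ici 0))
    (hg_nonneg : ∀ t, 0 ≤ t → 0 ≤ g t)
    (hg_deriv : ∀ t, 0 ≤ t → HasDerivAt g (g' t) t) (hg'_cont : Continuous g')
    (hF_pos : ∀ t, 0 < F t) (hF_diff : Differentiable ℝ F)
    (hF_int : IntegrableOn F (Set.Ioi 0))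
    (hDMRL : AntitoneOn (fun t => (∫ u in Set.Ioi t, F u) / F t) (Set.Ici 0))
    (e : ℝ → ℝ) (he_meas : Measurable e) (he : ∀ t, e t ∈ Set.Icc 0 M)
    (hbudget : (∫ t in Set.Ioi (0:ℝ), e t * F t) ≤ ∫ t in Set.Ioc (0:ℝ) tstar, M * F t) :
    (∫⁻ t in Set.Ioi (0:ℝ),
        ENNReal.ofReal
          (g (∫ τ in Set.Ioc (0:ℝ) t, (if τ ≤ tstar then M else 0)) * F t))
      ≤ ∫⁻ t in Set.Ioi (0:ℝ),
          ENNReal.ofReal (g (∫ τ in Set.Ioc (0:ℝ) t, e τ) * F t) :=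
  stmt_18_general M tstar hM ht g g' F hg_conv hg_anti hg_nonneg hg_deriv hF_pos hF_diff hF_int
    hDMRL e he_meas he hbudget
end
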